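/- Let X be the dual of a Banach space Y, j : X → (-∞,∞] proper, x ∈ dom(j), g ∈ ∂j(x). Suppose j is Hadamard directionally differentiable at x and strongly twice epi-differentiable at x for g (recovery sequences converge strongly). Then for every z in the reduced critical cone K := { z : Q(z) < ∞ }, the directional derivative satisfies j'(x; z) = ⟨g, z⟩. -/

import Mathlib

/-!
Because `g` is a subgradient, every second-order quotient of `j` at `x` for `g` is nonnegative,
so `Q(z)` is a finite real number `q`. For a recovery sequence `zₙ → z` along `tₙ = 1/(n+1)`, the
first-order quotient equals `⟨g, zₙ⟩ + (tₙ/2) · secondQuot`, which tends to `⟨g, z⟩ + 0 · q`;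
Hadamard differentiability says the same quotient tends to `j'(x; z)`.
-/

open Filter Topology

variable {Y : Type*} [NormedAddCommGroup Y] [NormedSpace ℝ Y] [CompleteSpace Y]

/-- Second-order difference quotient of `j` at `x` for `g` with step `t` and direction `w`. -/
noncomputable def secondQuot (j : StrongDual ℝ Y → EReal) (x : StrongDual ℝ Y)
    (g : Y) (t : ℝ) (w : StrongDual ℝ Y) : EReal :=
  ((2 / t ^ 2 : ℝ) : EReal) * (j (x + t • w) - j x - ((t * w g : ℝ) : EReal))

/-- Weak-* convergence of a sequence in the dual of `Y`. -/
def WeakStarTendsto (z : ℕ → StrongDual ℝ Y) (z₀ : StrongDual ℝ Y) : Prop :=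
  ∀ y : Y, Tendsto (fun n => z n y) atTop (nhds (z₀ y))

/-- The weak-* second subderivative of `j` at `x` for `g`. -/
noncomputable def Qsub (j : StrongDual ℝ Y → EReal) (x : StrongDual ℝ Y) (g : Y)
    (z : StrongDual ℝ Y) : EReal :=
  sInf { L | ∃ (t : ℕ → ℝ) (zs : ℕ → StrongDual ℝ Y),
      (∀ n, 0 < t n) ∧ Tendsto t atTop (nhds 0) ∧ WeakStarTendsto zs z ∧
      L = Filter.liminf (fun n => secondQuot j x g (t n) (zs n)) atTop }

omit [CompleteSpace Y] in
lemma secondQuot_nonneg {j : StrongDual ℝ Y → EReal} {x : StrongDual ℝ Y} {g : Y}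
    (hxbot : j x ≠ ⊥) (hxtop : j x ≠ ⊤)
    (hg : ∀ z : StrongDual ℝ Y, j x + (((z - x) g : ℝ) : EReal) ≤ j z)
    {t : ℝ} (ht : 0 < t) (w : StrongDual ℝ Y) :
    0 ≤ secondQuot j x g t w := by
  have hsub := hg (x + t • w)
  lift j x to ℝ using ⟨hxtop, hxbot⟩ with a ha
  rw [add_sub_cancel_left, smul_apply, smul_eq_mul, ← EReal.coe_add] at hsub
  rw [secondQuot, ← ha]
  refine mul_nonneg (by exact_mod_cast (by positivity : (0 : ℝ) ≤ 2 / t ^ 2)) ?_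
  generalize j (x + t • w) = v at hsub
  induction v using EReal.rec with
  | bot => exact absurd (le_bot_iff.1 hsub) (EReal.coe_ne_bot _)
  | top => rw [EReal.top_sub_coe, EReal.top_sub_coe]; exact le_top
  | coe b =>
    rw [← EReal.coe_sub, ← EReal.coe_sub, EReal.coe_nonneg]
    rw [EReal.coe_le_coe_iff] at hsub
    linarith

omit [CompleteSpace Y] in
lemma Qsub_nonneg {j : StrongDual ℝ Y → EReal} {x : StrongDual ℝ Y} {g : Y}
    (hxbot : j x ≠ ⊥) (hxtop : j x ≠ ⊤)
    (hg : ∀ z : StrongDual ℝ Y, j x + (((z - x) g : ℝ) : EReal) ≤ j z) (z : StrongDual ℝ Y) :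
    0 ≤ Qsub j x g z :=
  le_sInf <| by
    rintro L ⟨t, zs, ht, -, -, rfl⟩
    exact le_liminf_of_le (by isBoundedDefault)
      (Eventually.of_forall fun n => secondQuot_nonneg hxbot hxtop hg (ht n) (zs n))

omit [CompleteSpace Y] in
lemma inv_mul_sub_eq_add_mul_secondQuot {j : StrongDual ℝ Y → EReal} {x : StrongDual ℝ Y}
    (g : Y) (hxbot : j x ≠ ⊥) (hxtop : j x ≠ ⊤) {t : ℝ} (ht : 0 < t) (w : StrongDual ℝ Y) :
    ((1 / t : ℝ) : EReal) * (j (x + t • w) - j x) =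
      ((w g : ℝ) : EReal) + ((t / 2 : ℝ) : EReal) * secondQuot j x g t w := by
  lift j x to ℝ using ⟨hxtop, hxbot⟩ with a ha
  rw [secondQuot, ← ha]
  generalize j (x + t • w) = v
  induction v using EReal.rec with
  | bot =>
    rw [EReal.bot_sub, EReal.bot_sub, EReal.coe_mul_bot_of_pos (by positivity),
      EReal.coe_mul_bot_of_pos (by positivity), EReal.coe_mul_bot_of_pos (by positivity),
      EReal.add_bot]
  | top =>
    rw [EReal.top_sub_coe, EReal.top_sub_coe, EReal.coe_mul_top_of_pos (by positivity),
      EReal.coe_mul_top_of_pos (by positivity), EReal.coe_mul_top_of_pos (by positivity),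
      EReal.coe_add_top]
  | coe b =>
    norm_cast
    field_simp
    ring

lemma EReal.tendsto_coe_add_coe_mul {α : Type*} {l : Filter α} {d c : α → ℝ} {S : α → EReal}
    {d₀ q : ℝ} (hd : Tendsto d l (𝓝 d₀)) (hc : Tendsto c l (𝓝 0)) (hS : Tendsto S l (𝓝 q)) :
    Tendsto (fun n => (d n : EReal) + (c n : EReal) * S n) l (𝓝 (d₀ : EReal)) := by
  have hmul : Tendsto (fun n => (c n : EReal) * S n) l (𝓝 (((0 : ℝ) : EReal) * q)) :=
    (EReal.continuousAt_mul (by simp) (by simp) (by simp) (by simp)).tendsto.comp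
      ((EReal.tendsto_coe.2 hc).prodMk_nhds hS)
  rw [EReal.coe_zero, zero_mul] at hmul
  have hsum := (EReal.continuousAt_add_coe_coe d₀ 0).tendsto.comp
    ((EReal.tendsto_coe.2 hd).prodMk_nhds hmul)
  rwa [EReal.coe_zero, add_zero] at hsum

theorem dirDeriv_eq_pairing_on_reduced_critical_cone_general (j : StrongDual ℝ Y → EReal)
    (hbot : ∀ u, j u ≠ ⊥)
    (x : StrongDual ℝ Y) (hx : j x ≠ ⊤) (g : Y)
    (hg : ∀ z : StrongDual ℝ Y, j x + (((z - x) g : ℝ) : EReal) ≤ j z)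
    (j' : StrongDual ℝ Y → ℝ)
    (hHadamard : ∀ z : StrongDual ℝ Y, ∀ t : ℕ → ℝ, ∀ w : ℕ → StrongDual ℝ Y,
      (∀ n, 0 < t n) → Tendsto t atTop (nhds 0) → Tendsto w atTop (nhds z) →
      Tendsto (fun n => ((1 / t n : ℝ) : EReal) * (j (x + t n • w n) - j x)) atTop
        (nhds ((j' z : ℝ) : EReal)))
    (hepi : ∀ z : StrongDual ℝ Y, ∀ t : ℕ → ℝ, (∀ n, 0 < t n) →
      Tendsto t atTop (nhds 0) →
      ∃ zs : ℕ → StrongDual ℝ Y, Tendsto zs atTop (nhds z) ∧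
        Tendsto (fun n => secondQuot j x g (t n) (zs n)) atTop (nhds (Qsub j x g z))) :
    ∀ z : StrongDual ℝ Y, Qsub j x g z ≠ ⊤ → j' z = z g := by
  intro z hQtop
  have hQbot : Qsub j x g z ≠ ⊥ := (EReal.bot_lt_zero.trans_le (Qsub_nonneg (hbot x) hx hg z)).ne'
  obtain ⟨q, hq⟩ : ∃ q : ℝ, Qsub j x g z = q := ⟨_, (EReal.coe_toReal hQtop hQbot).symm⟩
  set t : ℕ → ℝ := fun n => 1 / (n + 1)
  have ht : ∀ n, 0 < t n := fun n => by positivity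
  have htlim : Tendsto t atTop (𝓝 0) := tendsto_one_div_add_atTop_nhds_zero_nat
  obtain ⟨zs, hzs, hS⟩ := hepi z t ht htlim
  have hzg : Tendsto (fun n => zs n g) atTop (𝓝 (z g)) :=
    ((ContinuousLinearMap.apply ℝ ℝ g).continuous.tendsto z).comp hzs
  have hquot : Tendsto (fun n => ((1 / t n : ℝ) : EReal) * (j (x + t n • zs n) - j x)) atTop
      (𝓝 ((z g : ℝ) : EReal)) := by
    simp_rw [inv_mul_sub_eq_add_mul_secondQuot g (hbot x) hx (ht _)]
    exact EReal.tendsto_coe_add_coe_mul hzg (by simpa using htlim.div_const 2) (hq ▸ hS)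
  exact_mod_cast tendsto_nhds_unique (hHadamard z t zs ht htlim hzs) hquot

/-- if `j` is Hadamard directionally differentiable at `x` and strongly twice
epi-differentiable at `x` for `g ∈ ∂j(x)`, then `j'(x; z) = ⟨g, z⟩` on the reduced
critical cone. -/
theorem dirDeriv_eq_pairing_on_reduced_critical_cone (j : StrongDual ℝ Y → EReal)
    (hbot : ∀ u, j u ≠ ⊥) (hproper : ∃ u, j u ≠ ⊤)
    (x : StrongDual ℝ Y) (hx : j x ≠ ⊤) (g : Y)
    (hg : ∀ z : StrongDual ℝ Y, j x + (((z - x) g : ℝ) : EReal) ≤ j z)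
    (j' : StrongDual ℝ Y → ℝ)
    (hHadamard : ∀ z : StrongDual ℝ Y, ∀ t : ℕ → ℝ, ∀ w : ℕ → StrongDual ℝ Y,
      (∀ n, 0 < t n) → Tendsto t atTop (nhds 0) → Tendsto w atTop (nhds z) →
      Tendsto (fun n => ((1 / t n : ℝ) : EReal) * (j (x + t n • w n) - j x)) atTop
        (nhds ((j' z : ℝ) : EReal)))
    (hepi : ∀ z : StrongDual ℝ Y, ∀ t : ℕ → ℝ, (∀ n, 0 < t n) →
      Tendsto t atTop (nhds 0) →
      ∃ zs : ℕ → StrongDual ℝ Y, Tendsto zs atTop (nhds z) ∧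
        Tendsto (fun n => secondQuot j x g (t n) (zs n)) atTop (nhds (Qsub j x g z))) :
    ∀ z : StrongDual ℝ Y, Qsub j x g z ≠ ⊤ → j' z = z g :=
  dirDeriv_eq_pairing_on_reduced_critical_cone_general j hbot x hx g hg j' hHadamard hepi
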